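/- arXiv:2508.12525 — 6 statements merged into one kernel-verified Lean document; each statement's English description precedes it below -/
import Mathlib

section
/- Let Ω ⊆ ℝ²_{≥0} be a moment domain, let k be a positive integer and let ℓ ∈ ℤ_{>0} ∪ {∞}. Then for every (≥k,ℓ)-admissible finite multiset P ∈ 𝒫_{≥k,ℓ} of pairs, one has Σ_{(i,j) ∈ P} ‖(i,j)‖_Ω^* ≥ min_{P' ∈ 𝒫_{k,ℓ}} Σ_{(i,j) ∈ P'} ‖(i,j)‖_Ω^*. In particular the infimum of the total dual norm over 𝒫_{≥k,ℓ} is at least the minimum over 𝒫_{k,ℓ}. -/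
open scoped BigOperators

/-- The "dual norm" `‖v‖_Ω^* = max_{w ∈ Ω} ⟨v,w⟩` of a vector `v ∈ ℝ²`
with respect to a (nonempty compact) set `Ω ⊆ ℝ²`. -/
noncomputable def dualNorm (Ω : Set (ℝ × ℝ)) (v : ℝ × ℝ) : ℝ :=
  sSup ((fun w : ℝ × ℝ => v.1 * w.1 + v.2 * w.2) '' Ω)

/-- The dual norm of a pair of nonnegative integers. -/
noncomputable def pairNorm (Ω : Set (ℝ × ℝ)) (p : ℕ × ℕ) : ℝ :=
  dualNorm Ω ((p.1 : ℝ), (p.2 : ℝ))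

/-- Total dual norm of a finite multiset of pairs. -/
noncomputable def totalNorm (Ω : Set (ℝ × ℝ)) (P : Multiset (ℕ × ℕ)) : ℝ :=
  (P.map (pairNorm Ω)).sum

/-- `(k,ℓ)`-admissibility of a finite multiset of pairs in `ℤ_{≥0}² \ {(0,0)}`:
the index condition `Σ (i+j) + q − 1 = k` (written additively), weak permissibility,
and length at most `ℓ ∈ ℕ∞`. -/
def Admissible (k : ℕ) (ℓ : ℕ∞) (P : Multiset (ℕ × ℕ)) : Prop :=
  (∀ p ∈ P, p ≠ (0, 0)) ∧
  (P.map (fun p => p.1 + p.2)).sum + Multiset.card P = k + 1 ∧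
  (2 ≤ Multiset.card P → (∃ p ∈ P, p.1 ≠ 0) ∧ (∃ p ∈ P, p.2 ≠ 0)) ∧
  (Multiset.card P : ℕ∞) ≤ ℓ

/-- `(≥k,ℓ)`-admissibility: same as `(k,ℓ)`-admissibility with the index condition
relaxed to `Σ (i+j) + q − 1 ≥ k`. -/
def GeAdmissible (k : ℕ) (ℓ : ℕ∞) (P : Multiset (ℕ × ℕ)) : Prop :=
  (∀ p ∈ P, p ≠ (0, 0)) ∧
  k + 1 ≤ (P.map (fun p => p.1 + p.2)).sum + Multiset.card P ∧
  (2 ≤ Multiset.card P → (∃ p ∈ P, p.1 ≠ 0) ∧ (∃ p ∈ P, p.2 ≠ 0)) ∧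
  (Multiset.card P : ℕ∞) ≤ ℓ

/-- The combinatorial capacity `G_k^ℓ(Ω) = min_{P ∈ 𝒫_{k,ℓ}} Σ_{(i,j)∈P} ‖(i,j)‖_Ω^*`. -/
noncomputable def Gcap (Ω : Set (ℝ × ℝ)) (k : ℕ) (ℓ : ℕ∞) : ℝ :=
  sInf (totalNorm Ω '' {P | Admissible k ℓ P})

/-- A moment domain: a nonempty compact convex subset of the first quadrant of `ℝ²`
which is closed under coordinatewise decrease (the moment image of a 4-dimensional
convex toric domain). -/
def MomentDomain (Ω : Set (ℝ × ℝ)) : Prop :=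
  Ω.Nonempty ∧ IsCompact Ω ∧ Convex ℝ Ω ∧
  (∀ p ∈ Ω, 0 ≤ p.1 ∧ 0 ≤ p.2) ∧
  (∀ p ∈ Ω, ∀ q : ℝ × ℝ, 0 ≤ q.1 → q.1 ≤ p.1 → 0 ≤ q.2 → q.2 ≤ p.2 → q ∈ Ω)

/-- A long domain: a compact convex subset of the first quadrant containing the unit
square `[0,1] × [0,1]` and with maximal `y`-coordinate equal to `1`. -/
def LongDomain (Ω : Set (ℝ × ℝ)) : Prop :=
  IsCompact Ω ∧ Convex ℝ Ω ∧
  (∀ p ∈ Ω, 0 ≤ p.1 ∧ 0 ≤ p.2) ∧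
  Set.Icc ((0 : ℝ), (0 : ℝ)) (1, 1) ⊆ Ω ∧
  (∀ p ∈ Ω, p.2 ≤ 1)


section Aux

variable {Ω : Set (ℝ × ℝ)}

lemma bddAbove_dual (hc : IsCompact Ω) (v : ℝ × ℝ) :
    BddAbove ((fun w : ℝ × ℝ => v.1 * w.1 + v.2 * w.2) '' Ω) :=
  (hc.image (by fun_prop)).bddAbove

lemma dualNorm_nonneg (hΩ : MomentDomain Ω) (v : ℝ × ℝ)
    (h1 : 0 ≤ v.1) (h2 : 0 ≤ v.2) : 0 ≤ dualNorm Ω v := by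
  obtain ⟨hne, hc, -, hnn, -⟩ := hΩ
  obtain ⟨w, hw⟩ := hne
  have : (0:ℝ) ≤ v.1 * w.1 + v.2 * w.2 :=
    add_nonneg (mul_nonneg h1 (hnn w hw).1) (mul_nonneg h2 (hnn w hw).2)
  exact this.trans (le_csSup (bddAbove_dual hc v) ⟨w, hw, rfl⟩)

lemma dualNorm_mono (hΩ : MomentDomain Ω) (v v' : ℝ × ℝ)
    (h1 : 0 ≤ v.1) (h2 : 0 ≤ v.2) (h1' : v.1 ≤ v'.1) (h2' : v.2 ≤ v'.2) :
    dualNorm Ω v ≤ dualNorm Ω v' := by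
  obtain ⟨hne, hc, -, hnn, -⟩ := hΩ
  apply csSup_le (hne.image _)
  rintro x ⟨w, hw, rfl⟩
  have : v.1 * w.1 + v.2 * w.2 ≤ v'.1 * w.1 + v'.2 * w.2 :=
    add_le_add (mul_le_mul_of_nonneg_right h1' (hnn w hw).1)
      (mul_le_mul_of_nonneg_right h2' (hnn w hw).2)
  exact this.trans (le_csSup (bddAbove_dual hc v') ⟨w, hw, rfl⟩)

lemma dualNorm_add (hΩ : MomentDomain Ω) (v u : ℝ × ℝ) :
    dualNorm Ω (v.1 + u.1, v.2 + u.2) ≤ dualNorm Ω v + dualNorm Ω u := by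
  obtain ⟨hne, hc, -, -, -⟩ := hΩ
  apply csSup_le (hne.image _)
  rintro x ⟨w, hw, rfl⟩
  show (v.1 + u.1) * w.1 + (v.2 + u.2) * w.2 ≤ _
  have heq : (v.1 + u.1) * w.1 + (v.2 + u.2) * w.2
      = (v.1 * w.1 + v.2 * w.2) + (u.1 * w.1 + u.2 * w.2) := by ring
  rw [heq]
  exact add_le_add (le_csSup (bddAbove_dual hc v) ⟨w, hw, rfl⟩)
    (le_csSup (bddAbove_dual hc u) ⟨w, hw, rfl⟩)

lemma pairNorm_nonneg (hΩ : MomentDomain Ω) (p : ℕ × ℕ) : 0 ≤ pairNorm Ω p :=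
  dualNorm_nonneg hΩ _ (by positivity) (by positivity)

lemma pairNorm_mono (hΩ : MomentDomain Ω) {p q : ℕ × ℕ}
    (h1 : p.1 ≤ q.1) (h2 : p.2 ≤ q.2) : pairNorm Ω p ≤ pairNorm Ω q :=
  dualNorm_mono hΩ _ _ (by positivity) (by positivity)
    (by exact Nat.cast_le.mpr h1) (by exact Nat.cast_le.mpr h2)

lemma pairNorm_add (hΩ : MomentDomain Ω) (p q : ℕ × ℕ) :
    pairNorm Ω (p + q) ≤ pairNorm Ω p + pairNorm Ω q := by
  have := dualNorm_add hΩ ((p.1 : ℝ), (p.2 : ℝ)) ((q.1 : ℝ), (q.2 : ℝ))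
  simpa [pairNorm, Prod.fst_add, Prod.snd_add, Nat.cast_add] using this

lemma totalNorm_nonneg (hΩ : MomentDomain Ω) (P : Multiset (ℕ × ℕ)) :
    0 ≤ totalNorm Ω P := by
  apply Multiset.sum_nonneg
  intro x hx
  obtain ⟨p, -, rfl⟩ := Multiset.mem_map.mp hx
  exact pairNorm_nonneg hΩ p

lemma totalNorm_cons (p : ℕ × ℕ) (Q : Multiset (ℕ × ℕ)) :
    totalNorm Ω (p ::ₘ Q) = pairNorm Ω p + totalNorm Ω Q := by
  simp [totalNorm]

/-- Key reduction lemma: any `(≥k,ℓ)`-admissible multiset dominates some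
`(k,ℓ)`-admissible one in total norm. -/
lemma key (hΩ : MomentDomain Ω) (k : ℕ) (hk : 1 ≤ k) (ℓ : ℕ∞) (hℓ : 1 ≤ ℓ) :
    ∀ n (P : Multiset (ℕ × ℕ)), Multiset.card P = n → GeAdmissible k ℓ P →
      ∃ P', Admissible k ℓ P' ∧ totalNorm Ω P' ≤ totalNorm Ω P := by
  intro n
  induction n with
  | zero =>
    intro P hcard hP
    obtain ⟨-, hidx, -, -⟩ := hP
    rw [Multiset.card_eq_zero.mp hcard] at hidx
    simp at hidx
  | succ m ih =>
    intro P hcard hP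
    obtain ⟨hnz, hidx, hperm, hlen⟩ := hP
    set S := (P.map (fun p => p.1 + p.2)).sum with hS
    by_cases heq : S + Multiset.card P = k + 1
    · exact ⟨P, ⟨hnz, heq, hperm, hlen⟩, le_refl _⟩
    · have hgt : k + 2 ≤ S + Multiset.card P := by omega
      rcases Nat.lt_or_ge m 1 with hm | hm
      · -- card P = 1
        interval_cases m
        obtain ⟨p, rfl⟩ := Multiset.card_eq_one.mp hcard
        have hSp : S = p.1 + p.2 := by simp [hS]
        have hpk : k ≤ p.1 + p.2 := by
          simp [Multiset.card_singleton] at hgt; omega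
        refine ⟨{(min p.1 k, k - min p.1 k)}, ⟨?_, ?_, ?_, ?_⟩, ?_⟩
        · intro q hq
          rw [Multiset.mem_singleton] at hq
          subst hq
          intro h
          rw [Prod.mk.injEq] at h
          omega
        · simp <;> omega
        · simp
        · simpa using hℓ
        · simp only [totalNorm, Multiset.map_singleton, Multiset.sum_singleton]
          exact pairNorm_mono hΩ (by simp <;> omega) (by simp <;> omega)
      · -- card P = m + 1 ≥ 2 : merge two elements
        have h2 : 2 ≤ Multiset.card P := by omega
        obtain ⟨p, hp⟩ := Multiset.card_pos_iff_exists_mem.mp (show 0 < Multiset.card P by omega)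
        obtain ⟨Q1, rfl⟩ := Multiset.exists_cons_of_mem hp
        have hQ1 : 1 ≤ Multiset.card Q1 := by
          rw [Multiset.card_cons] at hcard; omega
        obtain ⟨r, hr⟩ := Multiset.card_pos_iff_exists_mem.mp (show 0 < Multiset.card Q1 by omega)
        obtain ⟨Q, rfl⟩ := Multiset.exists_cons_of_mem hr
        set P1 : Multiset (ℕ × ℕ) := (p + r) ::ₘ Q with hP1
        have hcc := hcard
        simp only [Multiset.card_cons] at hcc
        have hcard1 : Multiset.card P1 = m := by
          simp only [hP1, Multiset.card_cons]
          omega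
        have hS1 : (P1.map (fun p => p.1 + p.2)).sum = S := by
          simp [hP1, hS, Prod.fst_add, Prod.snd_add]
          ring
        have hge1 : GeAdmissible k ℓ P1 := by
          refine ⟨?_, ?_, ?_, ?_⟩
          · intro q hq
            rw [hP1, Multiset.mem_cons] at hq
            rcases hq with rfl | hq
            · have := hnz p (Multiset.mem_cons_self _ _)
              intro h
              have h1 := congrArg Prod.fst h
              have h2 := congrArg Prod.snd h
              simp [Prod.fst_add, Prod.snd_add] at h1 h2
              exact this (Prod.ext (by omega) (by omega))
            · exact hnz q (by simp [hq])
          · rw [hS1, hcard1]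
            simp only [Multiset.card_cons] at hgt
            omega
          · intro hc2
            obtain ⟨⟨a, ha, ha1⟩, ⟨b, hb, hb2⟩⟩ := hperm h2
            constructor
            · rw [Multiset.mem_cons, Multiset.mem_cons] at ha
              rcases ha with h | h | h
              · refine ⟨p + r, Multiset.mem_cons_self _ _, ?_⟩
                rw [h] at ha1
                simp only [Prod.fst_add]
                omega
              · refine ⟨p + r, Multiset.mem_cons_self _ _, ?_⟩
                rw [h] at ha1
                simp only [Prod.fst_add]
                omega
              · exact ⟨a, by simp [hP1, h], ha1⟩
            · rw [Multiset.mem_cons, Multiset.mem_cons] at hb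
              rcases hb with h | h | h
              · refine ⟨p + r, Multiset.mem_cons_self _ _, ?_⟩
                rw [h] at hb2
                simp only [Prod.snd_add]
                omega
              · refine ⟨p + r, Multiset.mem_cons_self _ _, ?_⟩
                rw [h] at hb2
                simp only [Prod.snd_add]
                omega
              · exact ⟨b, by simp [hP1, h], hb2⟩
          · rw [hcard1]
            exact le_trans (by exact_mod_cast Nat.le_succ m) (hcard ▸ hlen)
        obtain ⟨P', hP', hle⟩ := ih P1 hcard1 hge1
        refine ⟨P', hP', hle.trans ?_⟩
        rw [hP1, totalNorm_cons, totalNorm_cons, totalNorm_cons, ← add_assoc]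
        exact add_le_add_left (pairNorm_add hΩ p r) _

end Aux

/-- for a moment domain, any `(≥k,ℓ)`-admissible multiset has total dual
norm at least the minimum over `(k,ℓ)`-admissible multisets. -/
theorem stmt_0 (Ω : Set (ℝ × ℝ)) (hΩ : MomentDomain Ω)
    (k : ℕ) (hk : 1 ≤ k) (ℓ : ℕ∞) (hℓ : 1 ≤ ℓ)
    (P : Multiset (ℕ × ℕ)) (hP : GeAdmissible k ℓ P) :
    Gcap Ω k ℓ ≤ totalNorm Ω P := by
  obtain ⟨P', hP', hle⟩ := key hΩ k hk ℓ hℓ (Multiset.card P) P rfl hP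
  have hmem : totalNorm Ω P' ∈ totalNorm Ω '' {Q | Admissible k ℓ Q} := ⟨P', hP', rfl⟩
  have hbdd : BddBelow (totalNorm Ω '' {Q | Admissible k ℓ Q}) := by
    refine ⟨0, ?_⟩
    rintro x ⟨Q, -, rfl⟩
    exact totalNorm_nonneg hΩ Q
  exact (csInf_le hbdd hmem).trans hle
end

section
/- Let Ω ⊆ ℝ² be a long domain. Suppose the set S := {j ∈ ℤ_{≥0} : ‖(0,1)‖_Ω^* + ‖(1,j)‖_Ω^* < ‖(1,j+2)‖_Ω^*} is nonempty, and let J := min S. Then every integer j > J also lies in S; that is, for all integers j > J one has ‖(0,1)‖_Ω^* + ‖(1,j)‖_Ω^* < ‖(1,j+2)‖_Ω^* (note ‖(0,1)‖_Ω^* = 1 for a long domain). -/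
open scoped BigOperators

/-- if `J` is the least `j ≥ 0` with
`‖(0,1)‖_Ω^* + ‖(1,j)‖_Ω^* < ‖(1,j+2)‖_Ω^*` for a long domain `Ω`, then every
`j > J` also satisfies this strict inequality. -/
theorem stmt_4 (Ω : Set (ℝ × ℝ)) (hΩ : LongDomain Ω)
    (S : Set ℕ)
    (hS : S = {j : ℕ | pairNorm Ω (0, 1) + pairNorm Ω (1, j) < pairNorm Ω (1, j + 2)})
    (hne : S.Nonempty) (J : ℕ) (hJ : J = sInf S) :
    ∀ j : ℕ, J < j →
      pairNorm Ω (0, 1) + pairNorm Ω (1, j) < pairNorm Ω (1, j + 2) := by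
  obtain ⟨hcomp, hconv, hquad, hsq, hy⟩ := hΩ
  have hΩne : Ω.Nonempty := ⟨(0,0), hsq (by simp [Set.mem_Icc, Prod.le_def])⟩
  have himg : ∀ j : ℕ, pairNorm Ω (1, j) =
      sSup ((fun w : ℝ×ℝ => w.1 + (j:ℝ)*w.2) '' Ω) := by
    intro j
    simp [pairNorm, dualNorm]
  have hbdd : ∀ j : ℕ, BddAbove ((fun w : ℝ×ℝ => w.1 + (j:ℝ)*w.2) '' Ω) :=
    fun j => (hcomp.image (by fun_prop)).bddAbove
  have hle : ∀ j : ℕ, ∀ w ∈ Ω, w.1 + (j:ℝ)*w.2 ≤ pairNorm Ω (1, j) := by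
    intro j w hw
    rw [himg]
    exact le_csSup (hbdd j) ⟨w, hw, rfl⟩
  have hmid : ∀ j : ℕ, 2 * pairNorm Ω (1, j+1) ≤ pairNorm Ω (1, j) + pairNorm Ω (1, j+2) := by
    intro j
    have h : pairNorm Ω (1, j+1) ≤ (pairNorm Ω (1, j) + pairNorm Ω (1, j+2))/2 := by
      rw [himg (j+1)]
      apply csSup_le (hΩne.image _)
      rintro a ⟨w, hw, rfl⟩
      have h1 := hle j w hw
      have h2 := hle (j+2) w hw
      push_cast at h1 h2 ⊢
      linarith
    linarith
  have gmono : Monotone (fun j : ℕ => pairNorm Ω (1, j+1) - pairNorm Ω (1, j)) := by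
    apply monotone_nat_of_le_succ
    intro j
    have := hmid j
    linarith
  intro j hJj
  have hJS : J ∈ S := hJ ▸ Nat.sInf_mem hne
  rw [hS] at hJS
  simp only [Set.mem_setOf_eq] at hJS
  have h1 := gmono (le_of_lt hJj)
  have h2 := gmono (show J+1 ≤ j+1 by omega)
  dsimp only at h1 h2
  linarith
end

section
/- Let Ω ⊆ ℝ² be a long domain, suppose the set S := {j ∈ ℤ_{≥0} : 1 + ‖(1,j)‖_Ω^* < ‖(1,j+2)‖_Ω^*} is nonempty, and let J := min S. Then for every positive integer k: (a) G_k^1(Ω) = k; and (b) G_k^∞(Ω) = k if k ≤ J; G_k^∞(Ω) = min{k, (k−J−1)/2 + ‖(1,J)‖_Ω^*} if k > J and k − J is odd; and G_k^∞(Ω) = min{k, (k−J−2)/2 + ‖(1,J+1)‖_Ω^*} if k > J and k − J is even. -/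
open scoped BigOperators

section Basic
variable {Ω : Set (ℝ × ℝ)}

lemma mem_one_one (h : LongDomain Ω) : ((1:ℝ),(1:ℝ)) ∈ Ω := by
  apply h.2.2.2.1
  constructor
  · exact ⟨by norm_num, by norm_num⟩
  · exact ⟨le_refl _, le_refl _⟩

lemma longDomain_nonempty (h : LongDomain Ω) : Ω.Nonempty := ⟨_, mem_one_one h⟩

lemma le_pairNorm (h : LongDomain Ω) (v : ℕ × ℕ) {w : ℝ × ℝ} (hw : w ∈ Ω) :
    (v.1 : ℝ) * w.1 + (v.2 : ℝ) * w.2 ≤ pairNorm Ω v := by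
  apply le_csSup
  · exact (h.1.image (by fun_prop)).bddAbove
  · exact ⟨w, hw, rfl⟩

lemma exists_pairNorm (h : LongDomain Ω) (v : ℕ × ℕ) :
    ∃ w ∈ Ω, pairNorm Ω v = (v.1 : ℝ) * w.1 + (v.2 : ℝ) * w.2 := by
  have hc : IsCompact ((fun w : ℝ×ℝ => (v.1:ℝ)*w.1 + (v.2:ℝ)*w.2) '' Ω) :=
    h.1.image (by fun_prop)
  have hmem := hc.sSup_mem ((longDomain_nonempty h).image _)
  obtain ⟨w, hw, hval⟩ := hmem
  exact ⟨w, hw, hval.symm⟩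

lemma pairNorm_ge (h : LongDomain Ω) (v : ℕ × ℕ) :
    (v.1 : ℝ) + (v.2 : ℝ) ≤ pairNorm Ω v := by
  have := le_pairNorm h v (mem_one_one h)
  simpa using this

lemma pairNorm_zero_left (h : LongDomain Ω) (j : ℕ) :
    pairNorm Ω (0, j) = (j : ℝ) := by
  obtain ⟨w, hw, hval⟩ := exists_pairNorm h (0, j)
  have h2 := h.2.2.2.2 w hw
  have := pairNorm_ge h (0, j)
  simp only at hval
  have : pairNorm Ω (0,j) ≤ (j:ℝ) := by
    rw [hval]; push_cast
    nlinarith [Nat.cast_nonneg (α := ℝ) j]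
  have h3 := pairNorm_ge h (0, j)
  simp only [Nat.cast_zero] at h3
  linarith

end Basic

section Ffacts
variable {Ω : Set (ℝ × ℝ)}

/-- monotone: f j ≤ f (j+1) -/
lemma f_mono (h : LongDomain Ω) {j j' : ℕ} (hj : j ≤ j') :
    pairNorm Ω (1, j) ≤ pairNorm Ω (1, j') := by
  obtain ⟨w, hw, hval⟩ := exists_pairNorm h (1, j)
  have h2 := le_pairNorm h (1, j') hw
  have hpos := (h.2.2.1 w hw).2
  simp only at hval h2 ⊢
  rw [hval]
  have : (j:ℝ) * w.2 ≤ (j':ℝ) * w.2 := by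
    apply mul_le_mul_of_nonneg_right _ hpos
    exact_mod_cast hj
  linarith

/-- step: f (j+1) ≤ f j + 1 -/
lemma f_step (h : LongDomain Ω) (j : ℕ) :
    pairNorm Ω (1, j + 1) ≤ pairNorm Ω (1, j) + 1 := by
  obtain ⟨w, hw, hval⟩ := exists_pairNorm h (1, j + 1)
  have h2 := le_pairNorm h (1, j) hw
  have hy := h.2.2.2.2 w hw
  simp only at hval h2 ⊢
  rw [hval]; push_cast at h2 ⊢
  nlinarith

/-- convexity: 2 f(j+1) ≤ f j + f (j+2) -/
lemma f_convex (h : LongDomain Ω) (j : ℕ) :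
    2 * pairNorm Ω (1, j + 1) ≤ pairNorm Ω (1, j) + pairNorm Ω (1, j + 2) := by
  obtain ⟨w, hw, hval⟩ := exists_pairNorm h (1, j + 1)
  have h2 := le_pairNorm h (1, j) hw
  have h3 := le_pairNorm h (1, j + 2) hw
  simp only at hval h2 h3 ⊢
  rw [hval]; push_cast at *
  nlinarith

/-- f j ≥ j + 1 -/
lemma f_lb (h : LongDomain Ω) (j : ℕ) : (j : ℝ) + 1 ≤ pairNorm Ω (1, j) := by
  have := pairNorm_ge h (1, j)
  simp only [Nat.cast_one] at this
  linarith

/-- L2: for j ≤ i * J', i * f J' ≤ N(i,j) + (i*J' - j) -/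
lemma L2 (h : LongDomain Ω) {i j J' : ℕ} (hj : j ≤ i * J') :
    (i : ℝ) * pairNorm Ω (1, J') ≤ pairNorm Ω (i, j) + ((i * J' : ℕ) - (j:ℕ) : ℝ) := by
  obtain ⟨w, hw, hval⟩ := exists_pairNorm h (1, J')
  have h2 := le_pairNorm h (i, j) hw
  have hy := h.2.2.2.2 w hw
  have hy0 := (h.2.2.1 w hw).2
  simp only at hval h2 ⊢
  rw [hval]
  have hc : ((i * J' : ℕ) : ℝ) - (j : ℝ) = ((i:ℝ) * J' - j) := by push_cast; ring
  rw [hc]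
  have hnn : (0:ℝ) ≤ (i:ℝ) * J' - j := by
    have : (j:ℝ) ≤ (i:ℝ) * J' := by exact_mod_cast hj
    linarith
  push_cast at h2 ⊢
  nlinarith [mul_le_mul_of_nonneg_left hy hnn]

end Ffacts

section Qfacts
variable {Ω : Set (ℝ × ℝ)} {J : ℕ}

/-- pairs above J: ∀ m ≥ J, 1 + f m ≤ f (m+2) -/
lemma hup (h : LongDomain Ω) (hJin : 1 + pairNorm Ω (1, J) < pairNorm Ω (1, J + 2)) :
    ∀ m, J ≤ m → 1 + pairNorm Ω (1, m) ≤ pairNorm Ω (1, m + 2) := by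
  intro m hm
  induction m, hm using Nat.le_induction with
  | base => linarith
  | succ n hn ih =>
    have h1 := f_convex h n
    have h2 := f_convex h (n + 1)
    have : n + 1 + 2 = n + 3 := by ring
    rw [this]
    have h3 : n + 2 + 1 = n + 3 := by ring
    linarith [f_convex h (n+1)]

/-- P1 : increments below J are ≤ 1/2 -/
lemma hP1 (h : LongDomain Ω)
    (hout : ∀ m, m < J → pairNorm Ω (1, m + 2) ≤ 1 + pairNorm Ω (1, m)) :
    ∀ m, m < J → 2 * pairNorm Ω (1, m + 1) ≤ 2 * pairNorm Ω (1, m) + 1 := by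
  intro m hm
  have h1 := f_convex h m
  have h2 := hout m hm
  have h3 := f_mono h (Nat.le_succ (m+1))
  linarith

/-- Q1 : ∀ s, j + s ≤ J → 2 f (j+s) ≤ 2 f j + s -/
lemma hQ1 (h : LongDomain Ω)
    (hout : ∀ m, m < J → pairNorm Ω (1, m + 2) ≤ 1 + pairNorm Ω (1, m)) :
    ∀ (j s : ℕ), j + s ≤ J → 2 * pairNorm Ω (1, j + s) ≤ 2 * pairNorm Ω (1, j) + s := by
  intro j s
  induction s with
  | zero => intro _; simp
  | succ n ih =>
    intro hle
    have h1 : j + n ≤ J := by omega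
    have h2 := ih (by omega)
    have h3 := hP1 h hout (j + n) (by omega)
    have : j + (n + 1) = (j + n) + 1 := by ring
    rw [this]
    push_cast
    linarith

/-- Q2 : for m ≤ J+1, (J + m + 2) ≤ 2 f m ; uses f(J+1) ≥ J+2. -/
lemma hQ2 (h : LongDomain Ω)
    (hout : ∀ m, m < J → pairNorm Ω (1, m + 2) ≤ 1 + pairNorm Ω (1, m)) :
    ∀ m, m ≤ J + 1 → (J : ℝ) + m + 2 ≤ 2 * pairNorm Ω (1, m) := by
  intro m hm
  rcases Nat.lt_or_ge m (J + 1) with hlt | hge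
  · have hmJ : m ≤ J := by omega
    obtain ⟨s, hs⟩ := Nat.le.dest hmJ
    have q1 := hQ1 h hout m s (by omega)
    rw [hs] at q1
    have hf := f_lb h (J + 1)
    have hst := f_step h J
    push_cast at hf
    have hcast : (J:ℝ) = (m:ℝ) + (s:ℝ) := by exact_mod_cast congrArg (Nat.cast (R := ℝ)) hs.symm
    linarith
  · have hm1 : m = J + 1 := by omega
    subst hm1
    have hf := f_lb h (J + 1)
    push_cast at hf ⊢
    linarith

/-- Q3 : for J ≤ b, f b + s ≤ f (b + 2s) -/
lemma hQ3 (h : LongDomain Ω) (hJin : 1 + pairNorm Ω (1, J) < pairNorm Ω (1, J + 2)) :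
    ∀ (b : ℕ), J ≤ b → ∀ (s : ℕ), pairNorm Ω (1, b) + s ≤ pairNorm Ω (1, b + 2 * s) := by
  intro b hb s
  induction s with
  | zero => simp
  | succ n ih =>
    have h1 := hup h hJin (b + 2 * n) (by omega)
    have : b + 2 * (n + 1) = (b + 2 * n) + 2 := by ring
    rw [this]
    push_cast
    linarith

/-- Q6 : j + 2s ≤ J + 1 → f (j + 2s) ≤ f j + s -/
lemma hQ6 (h : LongDomain Ω)
    (hout : ∀ m, m < J → pairNorm Ω (1, m + 2) ≤ 1 + pairNorm Ω (1, m)) :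
    ∀ (j s : ℕ), j + 2 * s ≤ J + 1 → pairNorm Ω (1, j + 2 * s) ≤ pairNorm Ω (1, j) + s := by
  intro j s
  induction s with
  | zero => intro _; simp
  | succ n ih =>
    intro hle
    have h2 := ih (by omega)
    have h3 := hout (j + 2 * n) (by omega)
    have : j + 2 * (n + 1) = (j + 2 * n) + 2 := by ring
    rw [this]
    push_cast
    linarith

end Qfacts

section Elemmas
variable {Ω : Set (ℝ × ℝ)} {J : ℕ}

lemma ceilDiv_facts (i j : ℕ) (hi : 1 ≤ i) :
    j ≤ i * ((j + i - 1) / i) ∧ i * ((j + i - 1) / i) + 1 ≤ j + i ∧ (j + i - 1) / i ≤ j := by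
  have hlow := Nat.lt_mul_div_succ (j + i - 1) (show 0 < i by omega)
  have hexp : i * ((j + i - 1) / i + 1) = i * ((j + i - 1) / i) + i := by ring
  rw [hexp] at hlow
  have hupp : i * ((j + i - 1) / i) ≤ j + i - 1 := by
    have := Nat.div_mul_le_self (j + i - 1) i
    calc i * ((j + i - 1) / i) = (j + i - 1) / i * i := by ring
    _ ≤ j + i - 1 := this
  have hle : (j + i - 1) / i ≤ j := by
    have h1 : j + i - 1 ≤ i - 1 + j * i := by
      have : j ≤ j * i := Nat.le_mul_of_pos_right j (by omega)
      omega
    have h2 : (i - 1 + j * i) / i = (i - 1) / i + j := Nat.add_mul_div_right _ _ (by omega)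
    have h3 : (i - 1) / i = 0 := Nat.div_eq_of_lt (by omega)
    have h4 := Nat.div_le_div_right (c := i) h1
    rw [h2, h3] at h4
    omega
  exact ⟨by omega, by omega, hle⟩

lemma E_case1 (h : LongDomain Ω)
    (hout : ∀ m, m < J → pairNorm Ω (1, m + 2) ≤ 1 + pairNorm Ω (1, m))
    (k i j m : ℕ) (hi : 1 ≤ i) (hsum : i + j + m = k) (hkJ : k ≤ J) :
    (k : ℝ) ≤ pairNorm Ω (i, j) + (((m + 1) / 2 : ℕ) : ℝ) := by
  obtain ⟨hj1, hub, hJ'j⟩ := ceilDiv_facts i j hi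
  set J' := (j + i - 1) / i with hJ'def
  have hL2 := L2 h (J' := J') hj1
  have hq2 : (J : ℝ) + J' + 2 ≤ 2 * pairNorm Ω (1, J') := hQ2 h hout J' (by omega)
  have hq2i : (i:ℝ) * ((J : ℝ) + J' + 2) ≤ (i:ℝ) * (2 * pairNorm Ω (1, J')) :=
    mul_le_mul_of_nonneg_left hq2 (by positivity)
  have hc2 : (m : ℝ) ≤ 2 * (((m + 1) / 2 : ℕ) : ℝ) := by
    have : m ≤ 2 * ((m + 1) / 2) := by omega
    exact_mod_cast this
  have hcomb : i * J' + k ≤ i * J + i + j := by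
    have h1 : J ≤ i * J := Nat.le_mul_of_pos_left J (by omega)
    omega
  have hcombR : (i:ℝ) * J' + k ≤ (i:ℝ) * J + i + j := by exact_mod_cast hcomb
  have hmR : (m : ℝ) = (k:ℝ) - i - j := by
    have : (i:ℝ) + j + m = k := by exact_mod_cast hsum
    linarith
  have hjle : (j : ℝ) ≤ (i:ℝ) * J' := by exact_mod_cast hj1
  push_cast at hL2
  nlinarith [hL2, hq2i, hc2, hcombR]

end Elemmas

section Emain
variable {Ω : Set (ℝ × ℝ)} {J : ℕ}

lemma N_lb (h : LongDomain Ω) (i j : ℕ) (hi : 1 ≤ i) :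
    pairNorm Ω (1, (j + i - 1) / i) + (i : ℝ) + (j : ℝ) - (((j + i - 1) / i : ℕ) : ℝ) - 1
      ≤ pairNorm Ω (i, j) := by
  obtain ⟨hj1, hub, hJ'j⟩ := ceilDiv_facts i j hi
  have hL2 := L2 h (i := i) (j := j) (J' := (j + i - 1) / i) hj1
  have hflb := f_lb h ((j + i - 1) / i)
  have hiR : (1:ℝ) ≤ (i:ℝ) := by exact_mod_cast hi
  push_cast at hL2
  nlinarith [hL2, hflb, hiR]

/-- gap bound above J : if J ≤ b and b ≤ J', then 2 f J' ≥ 2 f b + (J' - b - 1),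
where the -1 slack absorbs parity. -/
lemma gap_lb (h : LongDomain Ω) (hJin : 1 + pairNorm Ω (1, J) < pairNorm Ω (1, J + 2))
    {b J' : ℕ} (hb : J ≤ b) (hbJ' : b ≤ J') :
    2 * pairNorm Ω (1, b) + ((J' : ℝ) - b - 1) ≤ 2 * pairNorm Ω (1, J') := by
  obtain ⟨t, ht⟩ := Nat.le.dest hbJ'
  rcases Nat.even_or_odd t with ⟨s, hs⟩ | ⟨s, hs⟩
  · have q3 := hQ3 h hJin b hb s
    have : b + 2 * s = J' := by omega
    rw [this] at q3
    have htR : (J' : ℝ) = (b : ℝ) + 2 * s := by exact_mod_cast (by omega : J' = b + 2 * s)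
    push_cast at q3
    linarith
  · rcases Nat.eq_zero_or_pos s with hs0 | hspos
    · -- t = 1 : J' = b + 1, bound is 2 f b + 0 ≤ 2 f J', monotone
      have hmono := f_mono h (show b ≤ J' by omega)
      have htR : (J' : ℝ) = (b : ℝ) + 1 := by exact_mod_cast (by omega : J' = b + 1)
      linarith
    · -- t = 2s+1, s ≥ 1 : from base b+1 with gap 2s... rather base b, gap 2s, then mono
      have q3 := hQ3 h hJin b hb s
      have hmono := f_mono h (show b + 2 * s ≤ J' by omega)
      have htR : (J' : ℝ) = (b : ℝ) + 2 * s + 1 := by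
        exact_mod_cast (by omega : J' = b + 2 * s + 1)
      push_cast at q3
      linarith

lemma E_case2 (h : LongDomain Ω)
    (hout : ∀ m, m < J → pairNorm Ω (1, m + 2) ≤ 1 + pairNorm Ω (1, m))
    (hJin : 1 + pairNorm Ω (1, J) < pairNorm Ω (1, J + 2))
    (k i j m : ℕ) (hi : 1 ≤ i) (hsum : i + j + m = k) (hJk : J < k) (hodd : (k - J) % 2 = 1) :
    pairNorm Ω (1, J) + ((k : ℝ) - J - 1) / 2 ≤ pairNorm Ω (i, j) + (((m + 1) / 2 : ℕ) : ℝ) := by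
  obtain ⟨hj1, hub, hJ'j⟩ := ceilDiv_facts i j hi
  set J' := (j + i - 1) / i with hJ'def
  have hc2 : (m : ℝ) ≤ 2 * (((m + 1) / 2 : ℕ) : ℝ) := by
    have : m ≤ 2 * ((m + 1) / 2) := by omega
    exact_mod_cast this
  have hmR : (m : ℝ) = (k : ℝ) - i - j := by
    have : (i:ℝ) + j + m = k := by exact_mod_cast hsum
    linarith
  have hJ'jR : (J' : ℝ) ≤ (j : ℝ) := by exact_mod_cast hJ'j
  have hiR : (1:ℝ) ≤ (i:ℝ) := by exact_mod_cast hi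
  have hNlb := N_lb h i j hi
  rw [← hJ'def] at hNlb
  rcases Nat.lt_or_ge J J' with hflip | hJ'J
  -- J' ≥ J + 1
  · rcases Nat.lt_or_ge i 2 with hi1 | hi2
    · -- i = 1, hence J' = j ≥ J + 1
      have hieq : i = 1 := by omega
      subst hieq
      have hJ'eq : J' = j := by omega
      rw [hJ'eq] at hflip
      push_cast at hmR
      -- parity of j - J
      obtain ⟨t, ht⟩ := Nat.le.dest (show J ≤ j by omega)
      rcases Nat.even_or_odd t with ⟨s, hs⟩ | ⟨s, hs⟩
      · -- j = J + 2s
        have q3 := hQ3 h hJin J le_rfl s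
        have hj2 : J + 2 * s = j := by omega
        rw [hj2] at q3
        have hjR : (j : ℝ) = (J : ℝ) + 2 * s := by exact_mod_cast hj2.symm
        push_cast at q3
        linarith
      · -- j = J + 2s + 1, m odd
        have q3 := hQ3 h hJin (J + 1) (Nat.le_succ J) s
        have hj2 : J + 1 + 2 * s = j := by omega
        rw [hj2] at q3
        have hmono := f_mono h (show J ≤ J + 1 by omega)
        have hmodd : 2 * ((m + 1) / 2) = m + 1 := by omega
        have hceq : 2 * (((m + 1) / 2 : ℕ) : ℝ) = (m : ℝ) + 1 := by exact_mod_cast hmodd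
        have hjR : (j : ℝ) = (J : ℝ) + 1 + 2 * s := by exact_mod_cast hj2.symm
        push_cast at q3
        linarith
    · -- i ≥ 2
      have hgap := gap_lb h hJin (le_refl J) hflip.le
      have hi2R : (2:ℝ) ≤ (i:ℝ) := by exact_mod_cast hi2
      linarith
  · -- J' ≤ J
    obtain ⟨s, hs⟩ := Nat.le.dest hJ'J
    have q1 := hQ1 h hout J' s (by omega)
    rw [hs] at q1
    have hsR : (J : ℝ) = (J' : ℝ) + s := by exact_mod_cast hs.symm
    push_cast at q1
    linarith

lemma E_case3 (h : LongDomain Ω)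
    (hout : ∀ m, m < J → pairNorm Ω (1, m + 2) ≤ 1 + pairNorm Ω (1, m))
    (hJin : 1 + pairNorm Ω (1, J) < pairNorm Ω (1, J + 2))
    (k i j m : ℕ) (hi : 1 ≤ i) (hsum : i + j + m = k) (hJk : J < k) (heven : (k - J) % 2 = 0) :
    pairNorm Ω (1, J + 1) + ((k : ℝ) - J - 2) / 2 ≤ pairNorm Ω (i, j) + (((m + 1) / 2 : ℕ) : ℝ) := by
  obtain ⟨hj1, hub, hJ'j⟩ := ceilDiv_facts i j hi
  set J' := (j + i - 1) / i with hJ'def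
  have hc2 : (m : ℝ) ≤ 2 * (((m + 1) / 2 : ℕ) : ℝ) := by
    have : m ≤ 2 * ((m + 1) / 2) := by omega
    exact_mod_cast this
  have hmR : (m : ℝ) = (k : ℝ) - i - j := by
    have : (i:ℝ) + j + m = k := by exact_mod_cast hsum
    linarith
  have hJ'jR : (J' : ℝ) ≤ (j : ℝ) := by exact_mod_cast hJ'j
  have hiR : (1:ℝ) ≤ (i:ℝ) := by exact_mod_cast hi
  have hNlb := N_lb h i j hi
  rw [← hJ'def] at hNlb
  have hstepJ := f_step h J
  rcases Nat.lt_or_ge i 2 with hi1 | hi2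
  · -- i = 1, J' = j
    have hieq : i = 1 := by omega
    subst hieq
    push_cast at hmR
    rcases Nat.lt_or_ge J j with hflip | hjJ
    · -- j ≥ J + 1 : case (3d), parities of t = j - (J+1)
      obtain ⟨t, ht⟩ := Nat.le.dest (show J + 1 ≤ j by omega)
      rcases Nat.even_or_odd t with ⟨s, hs⟩ | ⟨s, hs⟩
      · have q3 := hQ3 h hJin (J + 1) (Nat.le_succ J) s
        have hj2 : J + 1 + 2 * s = j := by omega
        rw [hj2] at q3
        have hjR : (j : ℝ) = (J : ℝ) + 1 + 2 * s := by exact_mod_cast hj2.symm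
        push_cast at q3
        linarith
      · have q3 := hQ3 h hJin (J + 2) (by omega) s
        have hj2 : J + 2 + 2 * s = j := by omega
        rw [hj2] at q3
        have hmono := f_mono h (show J + 1 ≤ J + 2 by omega)
        have hmodd : 2 * ((m + 1) / 2) = m + 1 := by omega
        have hceq : 2 * (((m + 1) / 2 : ℕ) : ℝ) = (m : ℝ) + 1 := by exact_mod_cast hmodd
        have hjR : (j : ℝ) = (J : ℝ) + 2 + 2 * s := by exact_mod_cast hj2.symm
        push_cast at q3
        linarith
    · -- j ≤ J : case (3c), parities of g = J + 1 - j
      obtain ⟨t, ht⟩ := Nat.le.dest hjJ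
      rcases Nat.even_or_odd t with ⟨s, hs⟩ | ⟨s, hs⟩
      · -- J = j + 2s, so J + 1 - j odd : use Q6 to J then step, m odd
        have q6 := hQ6 h hout j s (by omega)
        have hj2 : j + 2 * s = J := by omega
        rw [hj2] at q6
        have hmodd : 2 * ((m + 1) / 2) = m + 1 := by omega
        have hceq : 2 * (((m + 1) / 2 : ℕ) : ℝ) = (m : ℝ) + 1 := by exact_mod_cast hmodd
        have hJR : (J : ℝ) = (j : ℝ) + 2 * s := by exact_mod_cast hj2.symm
        push_cast at q6
        linarith
      · -- J = j + 2s + 1, so J + 1 = j + 2(s+1) : use Q6 to J + 1 directly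
        have q6 := hQ6 h hout j (s + 1) (by omega)
        have hj2 : j + 2 * (s + 1) = J + 1 := by omega
        rw [hj2] at q6
        have hJR : (J : ℝ) = (j : ℝ) + 2 * s + 1 := by exact_mod_cast (by omega : J = j + 2 * s + 1)
        push_cast at q6
        linarith
  · have hi2R : (2:ℝ) ≤ (i:ℝ) := by exact_mod_cast hi2
    rcases Nat.lt_or_ge J J' with hflip | hJ'J
    · -- (3b) : i ≥ 2, J' ≥ J + 1
      have hgap := gap_lb h hJin (Nat.le_succ J) (show J + 1 ≤ J' by omega)
      push_cast at hgap
      linarith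
    · -- (3a) : i ≥ 2, J' ≤ J
      obtain ⟨s, hs⟩ := Nat.le.dest hJ'J
      have q1 := hQ1 h hout J' s (by omega)
      rw [hs] at q1
      have hsR : (J : ℝ) = (J' : ℝ) + s := by exact_mod_cast hs.symm
      push_cast at q1
      linarith

end Emain

section Lower
variable {Ω : Set (ℝ × ℝ)}

lemma lower_main (h : LongDomain Ω) {k : ℕ} (hk : 1 ≤ k) (T : ℝ) (hTk : T ≤ (k : ℝ))
    (hE : ∀ i j m : ℕ, 1 ≤ i → i + j + m = k →
        T ≤ pairNorm Ω (i, j) + (((m + 1) / 2 : ℕ) : ℝ))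
    (P : Multiset (ℕ × ℕ)) (hP : Admissible k ⊤ P) : T ≤ totalNorm Ω P := by
  obtain ⟨h0, hsum, hperm, -⟩ := hP
  by_cases hA : ∃ p ∈ P, p.1 ≠ 0
  · obtain ⟨p₀, hp₀, hi0⟩ := hA
    have hPP : p₀ ::ₘ P.erase p₀ = P := Multiset.cons_erase hp₀
    set P' := P.erase p₀ with hP'def
    set X : ℕ := (P'.map fun p => p.1 + p.2).sum with hX
    set q' : ℕ := Multiset.card P' with hq'
    have hsub : ∀ p ∈ P', p ∈ P := fun p hp => Multiset.mem_of_mem_erase hp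
    have hterm : ∀ p ∈ P', 1 ≤ p.1 + p.2 := by
      intro p hp
      have := h0 p (hsub p hp)
      rcases Nat.eq_zero_or_pos (p.1 + p.2) with h' | h'
      · exfalso; apply this; ext <;> omega
      · omega
    have hq'X : q' ≤ X := by
      have h1 : ((P'.map fun _ => (1:ℕ)).sum) ≤ X :=
        Multiset.sum_map_le_sum_map _ _ hterm
      simpa using h1
    have hsum' : (p₀.1 + p₀.2) + X + (q' + 1) = k + 1 := by
      rw [← hPP] at hsum
      simp only [Multiset.map_cons, Multiset.sum_cons, Multiset.card_cons] at hsum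
      omega
    have htot : totalNorm Ω P = pairNorm Ω p₀ + totalNorm Ω P' := by
      rw [← hPP]; simp [totalNorm]
    have hXle : (X : ℝ) ≤ totalNorm Ω P' := by
      have hcast : (X : ℝ) = (P'.map fun p => ((p.1 : ℝ) + (p.2 : ℝ))).sum := by
        rw [hX, Nat.cast_multiset_sum, Multiset.map_map]
        congr 1
        apply Multiset.map_congr rfl
        intro p _
        simp
      rw [hcast]
      exact Multiset.sum_map_le_sum_map _ _ (fun p _ => pairNorm_ge h p)
    have hEapp := hE p₀.1 p₀.2 (X + q') (by omega) (by omega)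
    have hceil : (((X + q' + 1) / 2 : ℕ) : ℝ) ≤ (X : ℝ) := by
      have : (X + q' + 1) / 2 ≤ X := by omega
      exact_mod_cast this
    rw [htot]
    have hpe : pairNorm Ω (p₀.1, p₀.2) = pairNorm Ω p₀ := by rw [Prod.mk.eta]
    rw [hpe] at hEapp
    linarith
  · push_neg at hA
    rcases Nat.lt_or_ge (Multiset.card P) 2 with hc2 | hc2
    · interval_cases hcard : Multiset.card P
      · rw [Multiset.card_eq_zero] at hcard
        subst hcard
        simp at hsum
      · rw [Multiset.card_eq_one] at hcard
        obtain ⟨p, hp⟩ := hcard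
        subst hp
        simp only [Multiset.map_singleton, Multiset.sum_singleton, Multiset.card_singleton] at hsum
        have hp1 : p.1 = 0 := hA p (Multiset.mem_singleton_self p)
        have hp2 : p.2 = k := by omega
        have hpk : p = (0, k) := by ext <;> simp [hp1, hp2]
        rw [hpk]
        unfold totalNorm
        simp only [Multiset.map_singleton, Multiset.sum_singleton]
        rw [pairNorm_zero_left h]
        exact hTk
    · exact absurd ((hperm hc2).1) (by push_neg; exact hA)

end Lower

section Upper
variable {Ω : Set (ℝ × ℝ)}

lemma adm_single {k : ℕ} (hk : 1 ≤ k) {ℓ : ℕ∞} (hℓ : 1 ≤ ℓ) :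
    Admissible k ℓ {(0, k)} := by
  refine ⟨?_, ?_, ?_, ?_⟩
  · intro p hp
    rw [Multiset.mem_singleton] at hp
    subst hp
    intro hcon
    have := congrArg Prod.snd hcon
    simp at this
    omega
  · simp
  · intro h2
    simp at h2
  · simpa using hℓ

lemma totalNorm_single (h : LongDomain Ω) (k : ℕ) :
    totalNorm Ω {(0, k)} = (k : ℝ) := by
  unfold totalNorm
  simp only [Multiset.map_singleton, Multiset.sum_singleton]
  exact pairNorm_zero_left h k

lemma adm_mix {k b s : ℕ} (hbs : b + 2 * s + 1 = k) :
    Admissible k ⊤ ((1, b) ::ₘ Multiset.replicate s (0, 1)) := by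
  refine ⟨?_, ?_, ?_, ?_⟩
  · intro p hp
    rcases Multiset.mem_cons.mp hp with h' | h'
    · subst h'; intro hcon; exact one_ne_zero (congrArg Prod.fst hcon)
    · rw [Multiset.eq_of_mem_replicate h']
      intro hcon
      exact one_ne_zero (congrArg Prod.snd hcon)
  · simp only [Multiset.map_cons, Multiset.sum_cons, Multiset.map_replicate,
      Multiset.sum_replicate, Multiset.card_cons, Multiset.card_replicate, smul_eq_mul]
    omega
  · intro h2
    simp only [Multiset.card_cons, Multiset.card_replicate] at h2
    constructor
    · exact ⟨(1, b), Multiset.mem_cons_self _ _, one_ne_zero⟩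
    · refine ⟨(0, 1), Multiset.mem_cons_of_mem ?_, one_ne_zero⟩
      rw [Multiset.mem_replicate]
      exact ⟨by omega, rfl⟩
  · exact le_top

lemma totalNorm_mix (h : LongDomain Ω) (b s : ℕ) :
    totalNorm Ω ((1, b) ::ₘ Multiset.replicate s (0, 1)) = pairNorm Ω (1, b) + (s : ℝ) := by
  unfold totalNorm
  simp only [Multiset.map_cons, Multiset.sum_cons, Multiset.map_replicate,
    Multiset.sum_replicate, smul_eq_mul]
  rw [pairNorm_zero_left h 1]
  ring

lemma Gcap_eq {k : ℕ} {ℓ : ℕ∞} (T : ℝ)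
    (hlb : ∀ P, Admissible k ℓ P → T ≤ totalNorm Ω P)
    (P₀ : Multiset (ℕ × ℕ)) (h₀ : Admissible k ℓ P₀) (hT₀ : totalNorm Ω P₀ = T) :
    Gcap Ω k ℓ = T := by
  apply le_antisymm
  · apply csInf_le
    · exact ⟨T, by rintro x ⟨P, hP, rfl⟩; exact hlb P hP⟩
    · exact ⟨P₀, h₀, hT₀⟩
  · refine le_csInf ⟨totalNorm Ω P₀, ⟨P₀, h₀, rfl⟩⟩ ?_
    rintro x ⟨P, hP, rfl⟩
    exact hlb P hP

lemma Gcap_le_of_adm {k : ℕ} {ℓ : ℕ∞} (T : ℝ)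
    (hlb : ∀ P, Admissible k ℓ P → T ≤ totalNorm Ω P)
    (P₀ : Multiset (ℕ × ℕ)) (h₀ : Admissible k ℓ P₀) :
    Gcap Ω k ℓ ≤ totalNorm Ω P₀ := by
  apply csInf_le
  · exact ⟨T, by rintro x ⟨P, hP, rfl⟩; exact hlb P hP⟩
  · exact ⟨P₀, h₀, rfl⟩

end Upper

/-- the Gutt–Hutchings (`ℓ = 1`) and McDuff–Siegel (`ℓ = ∞`) values
of `G_k^ℓ` for a long domain, in terms of the transition value `J`. -/
theorem stmt_6 (Ω : Set (ℝ × ℝ)) (hΩ : LongDomain Ω)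
    (S : Set ℕ)
    (hS : S = {j : ℕ | 1 + pairNorm Ω (1, j) < pairNorm Ω (1, j + 2)})
    (hne : S.Nonempty) (J : ℕ) (hJ : J = sInf S)
    (k : ℕ) (hk : 1 ≤ k) :
    Gcap Ω k 1 = k ∧
    (k ≤ J → Gcap Ω k ⊤ = k) ∧
    (J < k → Odd (k - J) →
      Gcap Ω k ⊤ = min (k : ℝ) (((k : ℝ) - J - 1) / 2 + pairNorm Ω (1, J))) ∧
    (J < k → Even (k - J) →
      Gcap Ω k ⊤ = min (k : ℝ) (((k : ℝ) - J - 2) / 2 + pairNorm Ω (1, J + 1))) := by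
  have hJin : 1 + pairNorm Ω (1, J) < pairNorm Ω (1, J + 2) := by
    have hmem := Nat.sInf_mem hne
    rw [← hJ, hS] at hmem
    exact hmem
  have hout : ∀ m, m < J → pairNorm Ω (1, m + 2) ≤ 1 + pairNorm Ω (1, m) := by
    intro m hm
    by_contra hcon
    push_neg at hcon
    have hmS : m ∈ S := by rw [hS]; exact hcon
    have := Nat.sInf_le hmS
    omega
  refine ⟨?_, ?_, ?_, ?_⟩
  · -- (a) Gutt-Hutchings
    apply Gcap_eq (k : ℝ)
    · intro P hP
      obtain ⟨h0, hsum, hperm, hlen⟩ := hP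
      have hcard : Multiset.card P ≤ 1 := by exact_mod_cast hlen
      have hcard1 : Multiset.card P = 1 := by
        rcases Nat.eq_zero_or_pos (Multiset.card P) with h' | h'
        · rw [Multiset.card_eq_zero] at h'
          subst h'
          simp at hsum
        · omega
      obtain ⟨p, hp⟩ := Multiset.card_eq_one.mp hcard1
      subst hp
      simp only [Multiset.map_singleton, Multiset.sum_singleton, Multiset.card_singleton] at hsum
      have hge := pairNorm_ge hΩ p
      unfold totalNorm
      simp only [Multiset.map_singleton, Multiset.sum_singleton]
      have : ((p.1 + p.2 : ℕ) : ℝ) = (k : ℝ) := by exact_mod_cast congrArg (Nat.cast (R := ℝ)) (by omega : p.1 + p.2 = k)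
      push_cast at this
      linarith
    · exact adm_single hk le_rfl
    · exact totalNorm_single hΩ k
  · -- (b1) k ≤ J
    intro hkJ
    apply Gcap_eq (k : ℝ)
    · intro P hP
      exact lower_main hΩ hk _ le_rfl
        (fun i j m hi hs => E_case1 hΩ hout k i j m hi hs hkJ) P hP
    · exact adm_single hk le_top
    · exact totalNorm_single hΩ k
  · -- (b2) odd case
    intro hJk hodd
    rw [Nat.odd_iff] at hodd
    set T := min (k : ℝ) (((k : ℝ) - J - 1) / 2 + pairNorm Ω (1, J)) with hT
    have hlb : ∀ P, Admissible k ⊤ P → T ≤ totalNorm Ω P := by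
      intro P hP
      refine lower_main hΩ hk T (min_le_left _ _) ?_ P hP
      intro i j m hi hs
      refine (min_le_right _ _).trans ?_
      have := E_case2 hΩ hout hJin k i j m hi hs hJk hodd
      linarith
    apply le_antisymm
    · apply le_min
      · have := Gcap_le_of_adm T hlb _ (adm_single hk le_top)
        rwa [totalNorm_single hΩ k] at this
      · have hbs : J + 2 * ((k - J - 1) / 2) + 1 = k := by omega
        have h1 := Gcap_le_of_adm T hlb _ (adm_mix hbs)
        rw [totalNorm_mix hΩ J ((k - J - 1) / 2)] at h1
        have hsR : (((k - J - 1) / 2 : ℕ) : ℝ) = ((k : ℝ) - J - 1) / 2 := by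
          have h2 : (2 * ((k - J - 1) / 2) + J + 1 : ℕ) = k := by omega
          have h3 : 2 * (((k - J - 1) / 2 : ℕ) : ℝ) + J + 1 = k := by exact_mod_cast h2
          linarith
        rw [hsR] at h1
        linarith
    · refine le_csInf ⟨_, ⟨_, adm_single hk le_top, rfl⟩⟩ ?_
      rintro x ⟨P, hP, rfl⟩
      exact hlb P hP
  · -- (b3) even case
    intro hJk heven
    rw [Nat.even_iff] at heven
    set T := min (k : ℝ) (((k : ℝ) - J - 2) / 2 + pairNorm Ω (1, J + 1)) with hT
    have hlb : ∀ P, Admissible k ⊤ P → T ≤ totalNorm Ω P := by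
      intro P hP
      refine lower_main hΩ hk T (min_le_left _ _) ?_ P hP
      intro i j m hi hs
      refine (min_le_right _ _).trans ?_
      have := E_case3 hΩ hout hJin k i j m hi hs hJk heven
      linarith
    apply le_antisymm
    · apply le_min
      · have := Gcap_le_of_adm T hlb _ (adm_single hk le_top)
        rwa [totalNorm_single hΩ k] at this
      · have hbs : (J + 1) + 2 * ((k - J - 2) / 2) + 1 = k := by omega
        have h1 := Gcap_le_of_adm T hlb _ (adm_mix hbs)
        rw [totalNorm_mix hΩ (J + 1) ((k - J - 2) / 2)] at h1
        have hsR : (((k - J - 2) / 2 : ℕ) : ℝ) = ((k : ℝ) - J - 2) / 2 := by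
          have h2 : (2 * ((k - J - 2) / 2) + J + 2 : ℕ) = k := by omega
          have h3 : 2 * (((k - J - 2) / 2 : ℕ) : ℝ) + J + 2 = k := by exact_mod_cast h2
          linarith
        rw [hsR] at h1
        linarith
    · refine le_csInf ⟨_, ⟨_, adm_single hk le_top, rfl⟩⟩ ?_
      rintro x ⟨P, hP, rfl⟩
      exact hlb P hP
end

section
/- Let a > 1 be a real number and let Ω := [0,a] × [0,1] ⊆ ℝ² (the moment image of the polydisk P(a,1), so that ‖(i,j)‖_Ω^* = a·i + j for integers i,j ≥ 0). Then for all positive integers k and ℓ: (1) if ℓ = 1 or k ∈ {1,2}, then G_k^ℓ(Ω) = k; (2) if ℓ ≥ 2, k ≥ 3, and (k−1)/2 ≥ ℓ − 1, then G_k^ℓ(Ω) = min{k, k + a − ℓ}; (3) if ℓ ≥ 2, k ≥ 3, and ℓ − 1 ≥ (k−1)/2, then G_k^ℓ(Ω) = min{k, ⌈(k−1)/2⌉ + a}. -/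
open scoped BigOperators

lemma pairNorm_box (a : ℝ) (ha : 0 ≤ a) (p : ℕ × ℕ) :
    pairNorm (Set.Icc ((0:ℝ),(0:ℝ)) (a,1)) p = a * p.1 + p.2 := by
  have hg : IsGreatest ((fun w : ℝ × ℝ => (p.1:ℝ) * w.1 + (p.2:ℝ) * w.2) ''
      Set.Icc ((0:ℝ),(0:ℝ)) (a,1)) (a * p.1 + p.2) := by
    constructor
    · refine ⟨(a,1), ?_, by ring⟩
      simp [Set.mem_Icc, Prod.le_def, ha]
    · rintro y ⟨w, hw, rfl⟩
      simp only [Set.mem_Icc, Prod.le_def] at hw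
      obtain ⟨⟨h1,h2⟩,⟨h3,h4⟩⟩ := hw
      have c1 : (0:ℝ) ≤ p.1 := by positivity
      have c2 : (0:ℝ) ≤ p.2 := by positivity
      dsimp only
      nlinarith [mul_le_mul_of_nonneg_left h3 c1, mul_le_mul_of_nonneg_left h4 c2]
  simpa [pairNorm, dualNorm] using hg.csSup_eq

lemma totalNorm_box (a : ℝ) (ha : 0 ≤ a) (P : Multiset (ℕ × ℕ)) :
    totalNorm (Set.Icc ((0:ℝ),(0:ℝ)) (a,1)) P
      = a * ((P.map Prod.fst).sum : ℝ) + ((P.map Prod.snd).sum : ℝ) := by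
  induction P using Multiset.induction with
  | empty => simp [totalNorm]
  | cons q s ih =>
    simp only [totalNorm, Multiset.map_cons, Multiset.sum_cons] at ih ⊢
    rw [pairNorm_box a ha, ih]
    push_cast
    ring

lemma gcap_box (a : ℝ) (ha : 1 < a) (k ℓ : ℕ) (hk : 1 ≤ k) (hℓ : 1 ≤ ℓ) :
    Gcap (Set.Icc ((0:ℝ),(0:ℝ)) (a,1)) k (ℓ : ℕ∞)
      = min (k : ℝ) ((k : ℝ) + a - (min ℓ ((k+1)/2) : ℕ)) := by
  have ha0 : (0:ℝ) ≤ a := le_of_lt (lt_trans one_pos ha)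
  set Ω := Set.Icc ((0:ℝ),(0:ℝ)) (a,1) with hΩ
  set m := min ℓ ((k+1)/2) with hm
  have hm1 : 1 ≤ m := by
    have : 1 ≤ (k+1)/2 := by omega
    omega
  have hm2 : 2*m ≤ k+1 := by
    have : m ≤ (k+1)/2 := min_le_right _ _
    omega
  have hmℓ : m ≤ ℓ := min_le_left _ _
  have hmk : m ≤ k := by omega
  -- first candidate
  have hP1 : Admissible k (ℓ : ℕ∞) {((0:ℕ),k)} := by
    refine ⟨?_, by simp, ?_, ?_⟩
    · intro p hp
      simp only [Multiset.mem_singleton] at hp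
      subst hp; simp; omega
    · intro h; simp at h
    · simp; exact_mod_cast hℓ
  have hv1 : totalNorm Ω {((0:ℕ),k)} = k := by
    rw [totalNorm_box a ha0]; simp
  -- second candidate
  have hP2 : Admissible k (ℓ : ℕ∞)
      (((1:ℕ), k+1-2*m) ::ₘ Multiset.replicate (m-1) ((0:ℕ),1)) := by
    refine ⟨?_, ?_, ?_, ?_⟩
    · intro p hp
      rcases Multiset.mem_cons.1 hp with h | h
      · subst h; simp
      · rw [Multiset.eq_of_mem_replicate h]; simp
    · simp [Multiset.sum_replicate]
      omega
    · intro hq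
      simp only [Multiset.card_cons, Multiset.card_replicate] at hq
      constructor
      · exact ⟨(1, k+1-2*m), Multiset.mem_cons_self _ _, by simp⟩
      · refine ⟨((0:ℕ),1), ?_, by simp⟩
        exact Multiset.mem_cons_of_mem (Multiset.mem_replicate.2 ⟨by omega, rfl⟩)
    · simp only [Multiset.card_cons, Multiset.card_replicate]
      have : 1 + (m-1) = m := by omega
      rw [Nat.cast_le]
      omega
  have hv2 : totalNorm Ω (((1:ℕ), k+1-2*m) ::ₘ Multiset.replicate (m-1) ((0:ℕ),1))
      = (k:ℝ) + a - m := by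
    rw [totalNorm_box a ha0]
    simp [Multiset.sum_replicate]
    have e1 : ((k+1-2*m : ℕ) : ℝ) = (k:ℝ) + 1 - 2*m := by
      push_cast [Nat.cast_sub hm2]; ring
    have e2 : ((m-1 : ℕ) : ℝ) = (m:ℝ) - 1 := by
      push_cast [Nat.cast_sub hm1]; ring
    rw [e1, e2]; ring
  -- lower bound
  have hlb : ∀ P : Multiset (ℕ × ℕ), Admissible k (ℓ : ℕ∞) P →
      min (k:ℝ) ((k:ℝ) + a - m) ≤ totalNorm Ω P := by
    intro P ⟨hne, hidx, hwp, hcard⟩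
    set S1 := (P.map Prod.fst).sum with hS1
    set S2 := (P.map Prod.snd).sum with hS2
    set q := Multiset.card P with hq
    have hsum : S1 + S2 + q = k + 1 := by
      rw [hS1, hS2, hq, ← Multiset.sum_map_add] at *
      exact hidx
    have hqle : q ≤ ℓ := by exact_mod_cast hcard
    have hq2 : 2*q ≤ k+1 := by
      have h1 : q ≤ (P.map (fun p => p.1 + p.2)).sum := by
        have := Multiset.sum_map_le_sum_map (fun _ => 1) (fun p => p.1 + p.2)
          (s := P) (fun p hp => by
            have := hne p hp
            rcases p with ⟨i, j⟩
            simp at this ⊢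
            omega)
        simpa using this
      omega
    rw [totalNorm_box a ha0, ← hS1, ← hS2]
    rcases Nat.eq_zero_or_pos S1 with h0 | hpos
    · -- all first coords zero
      have hall : ∀ p ∈ P, p.1 = 0 := by
        intro p hp
        have := Multiset.sum_eq_zero_iff.1 (hS1 ▸ h0) p.1 (Multiset.mem_map_of_mem _ hp)
        exact this
      have hq1 : q ≤ 1 := by
        by_contra h
        obtain ⟨⟨p, hp, hp1⟩, _⟩ := hwp (by omega)
        exact hp1 (hall p hp)
      have hqpos : 1 ≤ q := by
        rcases Nat.eq_zero_or_pos q with h | h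
        · exfalso
          have hP0 : P = 0 := Multiset.card_eq_zero.1 h
          have e2 : S2 = 0 := by rw [hS2, hP0]; simp
          omega
        · exact h
      have hq1' : q = 1 := le_antisymm hq1 hqpos
      have : S2 = k := by omega
      rw [h0, this]
      simpa using min_le_left (k:ℝ) ((k:ℝ)+a-(m:ℝ))
    · have h1 : (1:ℝ) ≤ S1 := by exact_mod_cast hpos
      have hqm : q ≤ m := by
        have : q ≤ (k+1)/2 := by omega
        omega
      have hsr : (S1:ℝ) + S2 = (k:ℝ) + 1 - q := by
        have h' : ((S1:ℝ) + S2 + q) = (k:ℝ) + 1 := by exact_mod_cast hsum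
        linarith
      have : (k:ℝ) + a - m ≤ a * S1 + S2 := by
        have hqr : (q:ℝ) ≤ m := by exact_mod_cast hqm
        nlinarith [mul_le_mul_of_nonneg_left h1 (le_of_lt (lt_trans one_pos ha))]
      exact le_trans (min_le_right _ _) this
  -- conclude
  have hne : (totalNorm Ω '' {P | Admissible k (ℓ:ℕ∞) P}).Nonempty :=
    ⟨_, ⟨_, hP1, rfl⟩⟩
  have hbdd : BddBelow (totalNorm Ω '' {P | Admissible k (ℓ:ℕ∞) P}) :=
    ⟨min (k:ℝ) ((k:ℝ) + a - m), by rintro x ⟨P, hP, rfl⟩; exact hlb P hP⟩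
  apply le_antisymm
  · apply le_min
    · rw [← hv1]; exact csInf_le hbdd ⟨_, hP1, rfl⟩
    · rw [← hv2]; exact csInf_le hbdd ⟨_, hP2, rfl⟩
  · exact le_csInf hne (by rintro x ⟨P, hP, rfl⟩; exact hlb P hP)

/-- the value of `G_k^ℓ` for the moment image `[0,a] × [0,1]` of the
polydisk `P(a,1)`, `a > 1`. -/
theorem stmt_7 (a : ℝ) (ha : 1 < a)
    (Ω : Set (ℝ × ℝ)) (hΩ : Ω = Set.Icc ((0 : ℝ), (0 : ℝ)) (a, 1))
    (k ℓ : ℕ) (hk : 1 ≤ k) (hℓ : 1 ≤ ℓ) :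
    ((ℓ = 1 ∨ k = 1 ∨ k = 2) → Gcap Ω k (ℓ : ℕ∞) = k) ∧
    (2 ≤ ℓ → 3 ≤ k → (ℓ : ℝ) - 1 ≤ ((k : ℝ) - 1) / 2 →
      Gcap Ω k (ℓ : ℕ∞) = min (k : ℝ) ((k : ℝ) + a - ℓ)) ∧
    (2 ≤ ℓ → 3 ≤ k → ((k : ℝ) - 1) / 2 ≤ (ℓ : ℝ) - 1 →
      Gcap Ω k (ℓ : ℕ∞) = min (k : ℝ) ((⌈((k : ℝ) - 1) / 2⌉ : ℝ) + a)) := by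
  subst hΩ
  have hmain := gcap_box a ha k ℓ hk hℓ
  refine ⟨?_, ?_, ?_⟩
  · intro h
    have hm : min ℓ ((k+1)/2) = 1 := by
      rcases h with rfl | rfl | rfl <;> omega
    rw [hmain, hm]
    rw [min_eq_left]
    push_cast
    linarith
  · intro h2 h3 hle
    have hn : 2*ℓ ≤ k+1 := by
      have : 2*(ℓ:ℝ) ≤ (k:ℝ)+1 := by linarith
      exact_mod_cast this
    have hm : min ℓ ((k+1)/2) = ℓ := by omega
    rw [hmain, hm]
  · intro h2 h3 hle
    have hn : k+1 ≤ 2*ℓ := by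
      have : (k:ℝ)+1 ≤ 2*(ℓ:ℝ) := by linarith
      exact_mod_cast this
    have hm : min ℓ ((k+1)/2) = (k+1)/2 := by omega
    rw [hmain, hm]
    have hceil : (⌈((k:ℝ)-1)/2⌉ : ℝ) = ((k/2 : ℕ) : ℝ) := by
      rcases Nat.even_or_odd k with ⟨t, ht⟩ | ⟨t, ht⟩
      · have hd : k/2 = t := by omega
        have : ⌈((k:ℝ)-1)/2⌉ = (t:ℤ) := by
          rw [Int.ceil_eq_iff]
          constructor <;> · push_cast [ht]; linarith
        rw [this, hd]; push_cast; ring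
      · have hd : k/2 = t := by omega
        have he : ((k:ℝ)-1)/2 = (t:ℝ) := by push_cast [ht]; ring
        rw [he, hd]
        simp
    have e : (k:ℝ) + a - (((k+1)/2 : ℕ):ℝ) = (⌈((k:ℝ)-1)/2⌉ : ℝ) + a := by
      have hs : k/2 + (k+1)/2 = k := by omega
      have : ((k/2:ℕ):ℝ) + (((k+1)/2:ℕ):ℝ) = (k:ℝ) := by exact_mod_cast congrArg (Nat.cast : ℕ → ℝ) hs
      rw [hceil]
      linarith
    rw [e]
end

section
/- Let Ω := {(x,y) ∈ ℝ² : x ≥ 0, y ≥ 0, x + y ≤ 1} (the moment image of the unit ball B⁴(1), so that ‖(i,j)‖_Ω^* = max(i,j) for integers i,j ≥ 0). Then for all positive integers k and ℓ: if k > 3(ℓ−1), then G_k^ℓ(Ω) = (ℓ − 1) + ⌈(k − 3(ℓ−1))/2⌉; and if k ≤ 3(ℓ−1), then G_k^ℓ(Ω) = 1 + i when k = 3i + 1, G_k^ℓ(Ω) = 1 + i when k = 3i + 2, and G_k^ℓ(Ω) = 2 + i when k = 3i + 3 (for integers i ≥ 0). -/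
open scoped BigOperators

namespace Stmt8Aux

def simplex : Set (ℝ × ℝ) := {p : ℝ × ℝ | 0 ≤ p.1 ∧ 0 ≤ p.2 ∧ p.1 + p.2 ≤ 1}

lemma pairNorm_simplex (p : ℕ × ℕ) :
    pairNorm simplex p = ((max p.1 p.2 : ℕ) : ℝ) := by
  unfold pairNorm dualNorm
  apply IsGreatest.csSup_eq
  constructor
  · rcases le_total p.2 p.1 with h | h
    · exact ⟨(1,0), ⟨by norm_num, by norm_num, by norm_num⟩, by
        simp [Nat.cast_max, max_eq_left (Nat.cast_le.mpr h : (p.2:ℝ) ≤ p.1)]⟩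
    · exact ⟨(0,1), ⟨by norm_num, by norm_num, by norm_num⟩, by
        simp [Nat.cast_max, max_eq_right (Nat.cast_le.mpr h : (p.1:ℝ) ≤ p.2)]⟩
  · rintro x ⟨w, ⟨hw1, hw2, hw3⟩, rfl⟩
    have h1 : (p.1 : ℝ) ≤ ((max p.1 p.2 : ℕ) : ℝ) := by exact_mod_cast le_max_left p.1 p.2
    have h2 : (p.2 : ℝ) ≤ ((max p.1 p.2 : ℕ) : ℝ) := by exact_mod_cast le_max_right p.1 p.2
    have hm : (0:ℝ) ≤ ((max p.1 p.2 : ℕ) : ℝ) := Nat.cast_nonneg _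
    have e1 := mul_le_mul_of_nonneg_right h1 hw1
    have e2 := mul_le_mul_of_nonneg_right h2 hw2
    have e3 : ((max p.1 p.2 : ℕ) : ℝ) * (w.1 + w.2) ≤ ((max p.1 p.2 : ℕ) : ℝ) :=
      mul_le_of_le_one_right hm hw3
    show (p.1:ℝ) * w.1 + (p.2:ℝ) * w.2 ≤ ((max p.1 p.2 : ℕ) : ℝ)
    nlinarith

lemma totalNorm_simplex (P : Multiset (ℕ × ℕ)) :
    totalNorm simplex P = (((P.map (fun p => max p.1 p.2)).sum : ℕ) : ℝ) := by
  unfold totalNorm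
  rw [Nat.cast_multiset_sum, Multiset.map_map]
  congr 1
  apply Multiset.map_congr rfl
  intro p _
  exact pairNorm_simplex p

lemma Gcap_simplex_eq (k : ℕ) (ℓ : ℕ∞) (c : ℕ)
    (hach : ∃ P, Admissible k ℓ P ∧ (P.map (fun p => max p.1 p.2)).sum = c)
    (hlb : ∀ P, Admissible k ℓ P → c ≤ (P.map (fun p => max p.1 p.2)).sum) :
    Gcap simplex k ℓ = c := by
  apply IsLeast.csInf_eq
  constructor
  · obtain ⟨P, hP, hN⟩ := hach
    exact ⟨P, hP, by rw [totalNorm_simplex, hN]⟩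
  · rintro x ⟨P, hP, rfl⟩
    rw [totalNorm_simplex]
    exact_mod_cast hlb P hP

lemma adm_bounds (k ℓ : ℕ) (P : Multiset (ℕ × ℕ)) (h : Admissible k (ℓ : ℕ∞) P) :
    k + 1 ≤ 3 * (P.map (fun p => max p.1 p.2)).sum ∧
    k + 1 ≤ 2 * (P.map (fun p => max p.1 p.2)).sum + ℓ := by
  obtain ⟨hne, hidx, _, hcard⟩ := h
  set N := (P.map (fun p => max p.1 p.2)).sum with hN
  have hS : (P.map (fun p => p.1 + p.2)).sum ≤ 2 * N := by
    rw [hN, ← Multiset.sum_map_mul_left]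
    exact Multiset.sum_map_le_sum_map _ _ (fun p _ => by omega)
  have hq : Multiset.card P ≤ N := by
    have hc1 : Multiset.card P = (P.map (fun _ => 1)).sum := by simp
    rw [hc1, hN]
    refine Multiset.sum_map_le_sum_map _ _ (fun p hp => ?_)
    have := hne p hp
    have h1 : p.1 ≠ 0 ∨ p.2 ≠ 0 := by
      by_contra hc
      push_neg at hc
      exact this (by ext <;> simp [hc.1, hc.2])
    omega
  have hc : Multiset.card P ≤ ℓ := by exact_mod_cast hcard
  omega

lemma adm_repl (k ℓ n a b : ℕ) (ha : 1 ≤ a)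
    (hidx : 2*n + (a+b) + (n+1) = k+1) (hcard : n+1 ≤ ℓ) :
    Admissible k (ℓ : ℕ∞) (Multiset.replicate n ((1,1):ℕ×ℕ) + {(a,b)}) ∧
    ((Multiset.replicate n ((1,1):ℕ×ℕ) + {(a,b)}).map (fun p => max p.1 p.2)).sum
      = n + max a b := by
  set P := Multiset.replicate n ((1,1):ℕ×ℕ) + {(a,b)} with hP
  have hmem : ∀ p : ℕ×ℕ, p ∈ P ↔ (n ≠ 0 ∧ p = (1,1)) ∨ p = (a,b) := by
    intro p
    simp [hP, Multiset.mem_replicate]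
  have hcardP : Multiset.card P = n + 1 := by simp [hP]
  refine ⟨⟨?_, ?_, ?_, ?_⟩, ?_⟩
  · intro p hp
    rcases (hmem p).mp hp with ⟨_, rfl⟩ | rfl
    · simp
    · simp only [ne_eq, Prod.mk.injEq, not_and]
      intro h'
      omega
  · have hsum : (P.map (fun p => p.1 + p.2)).sum = n * 2 + (a + b) := by
      simp [hP]
    rw [hsum, hcardP]; omega
  · intro h2
    rw [hcardP] at h2
    have hn : n ≠ 0 := by omega
    refine ⟨⟨(a,b), (hmem _).mpr (Or.inr rfl), by simp; omega⟩,
      ⟨(1,1), (hmem _).mpr (Or.inl ⟨hn, rfl⟩), by norm_num⟩⟩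
  · rw [hcardP]; exact_mod_cast hcard
  · simp [hP, mul_comm]

lemma ceil_half (r : ℕ) : ⌈(r:ℝ)/2⌉ = ((r+1)/2 : ℕ) := by
  set q := (r+1)/2 with hq
  have h1 : r ≤ 2*q := by omega
  have h2 : 2*q ≤ r+1 := by omega
  have c1 : (r:ℝ) ≤ 2*q := by exact_mod_cast h1
  have c2 : (2*q : ℝ) ≤ r+1 := by exact_mod_cast h2
  rw [Int.ceil_eq_iff]
  push_cast
  constructor <;> linarith

theorem stmt_8' (k ℓ : ℕ) (hk : 1 ≤ k) (hℓ : 1 ≤ ℓ) :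
    (3 * (ℓ - 1) < k →
      Gcap simplex k (ℓ : ℕ∞) =
        (ℓ : ℝ) - 1 + (⌈((k : ℝ) - 3 * ((ℓ : ℝ) - 1)) / 2⌉ : ℝ)) ∧
    (∀ i : ℕ, k = 3 * i + 1 → k ≤ 3 * (ℓ - 1) → Gcap simplex k (ℓ : ℕ∞) = 1 + i) ∧
    (∀ i : ℕ, k = 3 * i + 2 → k ≤ 3 * (ℓ - 1) → Gcap simplex k (ℓ : ℕ∞) = 1 + i) ∧
    (∀ i : ℕ, k = 3 * i + 3 → k ≤ 3 * (ℓ - 1) → Gcap simplex k (ℓ : ℕ∞) = 2 + i) := by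
  refine ⟨?_, ?_, ?_, ?_⟩
  · -- long case
    intro hlong
    set m := ℓ - 1 with hm
    set r := k - 3*m with hr
    have hℓm : ℓ = m + 1 := by omega
    have hkr : k = 3*m + r := by omega
    have hr1 : 1 ≤ r := by omega
    set a := (r+1)/2 with haq
    have hG : Gcap simplex k (ℓ : ℕ∞) = ((m + a : ℕ) : ℝ) := by
      apply Gcap_simplex_eq
      · refine ⟨_, (adm_repl k ℓ m a (r - a) (by omega) (by omega) (by omega)).1, ?_⟩
        rw [(adm_repl k ℓ m a (r - a) (by omega) (by omega) (by omega)).2]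
        have hmax : max a (r - a) = a := by omega
        rw [hmax]
      · intro P hP
        have := (adm_bounds k ℓ P hP).2
        omega
    rw [hG]
    have hceil : ((k : ℝ) - 3 * ((ℓ : ℝ) - 1)) = (r : ℝ) := by
      have h1 : (k:ℝ) = 3*(m:ℝ) + r := by exact_mod_cast hkr
      have hl : (ℓ:ℝ) = (m:ℝ) + 1 := by exact_mod_cast hℓm
      rw [h1, hl]; ring
    have hl : (ℓ:ℝ) = (m:ℝ) + 1 := by exact_mod_cast hℓm
    rw [hceil, ceil_half, ← haq, hl]
    push_cast
    ring
  · intro i hi hsh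
    have hG : Gcap simplex k (ℓ : ℕ∞) = ((i + 1 : ℕ) : ℝ) := by
      apply Gcap_simplex_eq
      · refine ⟨_, (adm_repl k ℓ i 1 0 le_rfl (by omega) (by omega)).1, ?_⟩
        rw [(adm_repl k ℓ i 1 0 le_rfl (by omega) (by omega)).2]; simp
      · intro P hP
        have := (adm_bounds k ℓ P hP).1
        omega
    rw [hG]; push_cast; ring
  · intro i hi hsh
    have hG : Gcap simplex k (ℓ : ℕ∞) = ((i + 1 : ℕ) : ℝ) := by
      apply Gcap_simplex_eq
      · refine ⟨_, (adm_repl k ℓ i 1 1 le_rfl (by omega) (by omega)).1, ?_⟩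
        rw [(adm_repl k ℓ i 1 1 le_rfl (by omega) (by omega)).2]; simp
      · intro P hP
        have := (adm_bounds k ℓ P hP).1
        omega
    rw [hG]; push_cast; ring
  · intro i hi hsh
    have hG : Gcap simplex k (ℓ : ℕ∞) = ((i + 2 : ℕ) : ℝ) := by
      apply Gcap_simplex_eq
      · refine ⟨_, (adm_repl k ℓ i 2 1 (by omega) (by omega) (by omega)).1, ?_⟩
        rw [(adm_repl k ℓ i 2 1 (by omega) (by omega) (by omega)).2]; simp
      · intro P hP
        have := (adm_bounds k ℓ P hP).1
        omega
    rw [hG]; push_cast; ring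

end Stmt8Aux

/-- the value of `G_k^ℓ` for the standard simplex (the moment image of
the unit ball `B⁴(1)`). -/
theorem stmt_8 (Ω : Set (ℝ × ℝ))
    (hΩ : Ω = {p : ℝ × ℝ | 0 ≤ p.1 ∧ 0 ≤ p.2 ∧ p.1 + p.2 ≤ 1})
    (k ℓ : ℕ) (hk : 1 ≤ k) (hℓ : 1 ≤ ℓ) :
    (3 * (ℓ - 1) < k →
      Gcap Ω k (ℓ : ℕ∞) =
        (ℓ : ℝ) - 1 + (⌈((k : ℝ) - 3 * ((ℓ : ℝ) - 1)) / 2⌉ : ℝ)) ∧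
    (∀ i : ℕ, k = 3 * i + 1 → k ≤ 3 * (ℓ - 1) → Gcap Ω k (ℓ : ℕ∞) = 1 + i) ∧
    (∀ i : ℕ, k = 3 * i + 2 → k ≤ 3 * (ℓ - 1) → Gcap Ω k (ℓ : ℕ∞) = 1 + i) ∧
    (∀ i : ℕ, k = 3 * i + 3 → k ≤ 3 * (ℓ - 1) → Gcap Ω k (ℓ : ℕ∞) = 2 + i) := by
  have hΩ' : Ω = Stmt8Aux.simplex := hΩ
  subst hΩ'
  exact Stmt8Aux.stmt_8' k ℓ hk hℓ
end

section
/- Let i < j be positive integers. Then there exists ε > 0 such that for every real number t with j < t < j + ε and t/i irrational, the following hold, where for m ≥ 1 we write A(m) for the m-th smallest element of the set {a·i : a ∈ ℤ_{≥1}} ∪ {b·t : b ∈ ℤ_{≥1}} (these elements are pairwise distinct since t/i is irrational, so A(m) is well defined): (1) A(i+j) = i·t; (2) for all positive integers m₁, m₂ with m₁ + m₂ = 2(i+j), one has A(m₁) + A(m₂) ≥ 2·A(i+j); and (3) A(2i + 2j + 1) > 2·A(i+j). -/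
open scoped BigOperators

/-- action-minimality of `η_L^i × η_L^i` on `∂E(t,i)` for `t` slightly
larger than `j`: for any strictly increasing enumeration `A` (indexed from `1`) of the
set of actions `{a·i : a ≥ 1} ∪ {b·t : b ≥ 1}`, one has `A(i+j) = i·t`,
`A(m₁) + A(m₂) ≥ 2·A(i+j)` whenever `m₁ + m₂ = 2(i+j)`, and
`A(2i+2j+1) > 2·A(i+j)`. -/
theorem stmt_9 (i j : ℕ) (hi : 0 < i) (hij : i < j) :
    ∃ ε > (0 : ℝ), ∀ t : ℝ, (j : ℝ) < t → t < (j : ℝ) + ε → Irrational (t / i) →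
      ∀ A : ℕ → ℝ,
        StrictMonoOn A (Set.Ici 1) →
        (∀ m : ℕ, 1 ≤ m → A m ∈
          ({x : ℝ | ∃ a : ℕ, 1 ≤ a ∧ x = (a : ℝ) * i} ∪
           {x : ℝ | ∃ b : ℕ, 1 ≤ b ∧ x = (b : ℝ) * t})) →
        (∀ x ∈ ({x : ℝ | ∃ a : ℕ, 1 ≤ a ∧ x = (a : ℝ) * i} ∪
           {x : ℝ | ∃ b : ℕ, 1 ≤ b ∧ x = (b : ℝ) * t}), ∃ m : ℕ, 1 ≤ m ∧ A m = x) →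
        (A (i + j) = (i : ℝ) * t ∧
         (∀ m₁ m₂ : ℕ, 1 ≤ m₁ → 1 ≤ m₂ → m₁ + m₂ = 2 * (i + j) →
           2 * A (i + j) ≤ A m₁ + A m₂) ∧
         2 * A (i + j) < A (2 * i + 2 * j + 1)) := by
  classical
  refine ⟨1/2, by norm_num, ?_⟩
  intro t ht1 ht2 hirr A hA hmem hsurj
  set S : Set ℝ := ({x : ℝ | ∃ a : ℕ, 1 ≤ a ∧ x = (a : ℝ) * i} ∪
      {x : ℝ | ∃ b : ℕ, 1 ≤ b ∧ x = (b : ℝ) * t}) with hS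
  have hi0 : (0:ℝ) < i := by exact_mod_cast hi
  have ht0 : (0:ℝ) < t := lt_of_le_of_lt (Nat.cast_nonneg j) ht1
  have hdisj : ∀ a b : ℕ, 1 ≤ b → (a:ℝ) * i ≠ (b:ℝ) * t := by
    intro a b hb h
    apply hirr
    refine ⟨(a : ℚ)/(b : ℚ), ?_⟩
    have hb0 : (b:ℝ) ≠ 0 := Nat.cast_ne_zero.mpr (by omega)
    push_cast
    rw [div_eq_div_iff hb0 hi0.ne']
    linarith [h]
  have hSpos : ∀ x ∈ S, (0:ℝ) < x := by
    rintro x (⟨a, ha, rfl⟩ | ⟨b, hb, rfl⟩)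
    · have h1 : (1:ℝ) ≤ a := by exact_mod_cast ha
      nlinarith
    · have h1 : (1:ℝ) ≤ b := by exact_mod_cast hb
      nlinarith
  have hinj1 : Function.Injective (fun a : ℕ => (a:ℝ) * i) := by
    intro a a' h
    simp only at h
    exact_mod_cast mul_right_cancel₀ hi0.ne' h
  have hinj2 : Function.Injective (fun b : ℕ => (b:ℝ) * t) := by
    intro a a' h
    simp only at h
    exact_mod_cast mul_right_cancel₀ ht0.ne' h
  have hcount : ∀ x : ℝ, 0 ≤ x →
      (S ∩ Set.Iic x).ncard = ⌊x / (i:ℝ)⌋₊ + ⌊x / t⌋₊ := by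
    intro x hx
    have h1 : S ∩ Set.Iic x =
        ↑(((Finset.Icc 1 ⌊x / (i:ℝ)⌋₊).image (fun a : ℕ => (a:ℝ) * i)) ∪
          ((Finset.Icc 1 ⌊x / t⌋₊).image (fun b : ℕ => (b:ℝ) * t))) := by
      ext s
      simp only [hS, Finset.coe_union, Finset.coe_image, Set.mem_inter_iff,
        Set.mem_union, Set.mem_setOf_eq, Set.mem_Iic, Set.mem_image,
        Finset.mem_coe, Finset.mem_Icc]
      constructor
      · rintro ⟨(⟨a, ha, rfl⟩ | ⟨b, hb, rfl⟩), hle⟩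
        · exact Or.inl ⟨a, ⟨ha, Nat.le_floor (by rw [le_div_iff₀ hi0]; linarith)⟩, rfl⟩
        · exact Or.inr ⟨b, ⟨hb, Nat.le_floor (by rw [le_div_iff₀ ht0]; linarith)⟩, rfl⟩
      · rintro (⟨a, ⟨ha, hafl⟩, rfl⟩ | ⟨b, ⟨hb, hbfl⟩, rfl⟩)
        · refine ⟨Or.inl ⟨a, ha, rfl⟩, ?_⟩
          have h2 : (a:ℝ) ≤ x / i :=
            (Nat.le_floor_iff (div_nonneg hx hi0.le)).mp hafl
          rw [← le_div_iff₀ hi0]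
          exact h2
        · refine ⟨Or.inr ⟨b, hb, rfl⟩, ?_⟩
          have h2 : (b:ℝ) ≤ x / t :=
            (Nat.le_floor_iff (div_nonneg hx ht0.le)).mp hbfl
          rw [← le_div_iff₀ ht0]
          exact h2
    have hdj : Disjoint ((Finset.Icc 1 ⌊x / (i:ℝ)⌋₊).image (fun a : ℕ => (a:ℝ) * i))
        ((Finset.Icc 1 ⌊x / t⌋₊).image (fun b : ℕ => (b:ℝ) * t)) := by
      rw [Finset.disjoint_left]
      rintro s hs1 hs2
      simp only [Finset.mem_image, Finset.mem_Icc] at hs1 hs2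
      obtain ⟨a, _, rfl⟩ := hs1
      obtain ⟨b, ⟨hb, _⟩, hbe⟩ := hs2
      exact hdisj a b hb hbe.symm
    rw [h1, Set.ncard_coe_finset, Finset.card_union_of_disjoint hdj,
        Finset.card_image_of_injective _ hinj1, Finset.card_image_of_injective _ hinj2,
        Nat.card_Icc, Nat.card_Icc]
    omega
  have hrank : ∀ m : ℕ, 1 ≤ m → m = ⌊A m / (i:ℝ)⌋₊ + ⌊A m / t⌋₊ := by
    intro m hm
    have hAm : A m ∈ S := hmem m hm
    have himg : S ∩ Set.Iic (A m) = A '' Set.Icc 1 m := by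
      ext s
      constructor
      · rintro ⟨hs, hsle⟩
        obtain ⟨m', hm', rfl⟩ := hsurj s hs
        exact ⟨m', ⟨hm', (hA.le_iff_le hm' hm).mp hsle⟩, rfl⟩
      · rintro ⟨m', ⟨h1, h2⟩, rfl⟩
        exact ⟨hmem m' h1, (hA.le_iff_le h1 hm).mpr h2⟩
    have hcard : (A '' Set.Icc 1 m).ncard = m := by
      rw [Set.ncard_image_of_injOn (hA.injOn.mono Set.Icc_subset_Ici_self)]
      rw [← Finset.coe_Icc, Set.ncard_coe_finset, Nat.card_Icc]
      omega
    rw [← hcount (A m) (hSpos _ hAm).le, himg, hcard]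
  have hfl_t : ⌊t⌋₊ = j := by
    rw [Nat.floor_eq_iff ht0.le]
    constructor
    · linarith
    · push_cast; linarith
  have hfl_2t : ⌊2*t⌋₊ = 2*j := by
    rw [Nat.floor_eq_iff (by linarith)]
    constructor
    · push_cast; linarith
    · push_cast; linarith
  -- Part (1)
  have hitS : (i:ℝ) * t ∈ S := Or.inr ⟨i, hi, rfl⟩
  obtain ⟨m₀, hm₀, hAm₀⟩ := hsurj _ hitS
  have h1 : A (i + j) = (i:ℝ) * t := by
    have hr := hrank m₀ hm₀
    rw [hAm₀] at hr
    have e1 : (i:ℝ) * t / i = t := by field_simp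
    have e2 : (i:ℝ) * t / t = (i:ℕ) := by field_simp
    rw [e1, e2, hfl_t, Nat.floor_natCast] at hr
    have : m₀ = i + j := by omega
    rw [← this, hAm₀]
  refine ⟨h1, ?_, ?_⟩
  -- Part (2)
  · intro m₁ m₂ h1' h2' hsum
    by_contra hcon
    push_neg at hcon
    have hx := hrank m₁ h1'
    have hy := hrank m₂ h2'
    have hx0 : 0 < A m₁ := hSpos _ (hmem _ h1')
    have hy0 : 0 < A m₂ := hSpos _ (hmem _ h2')
    set x := A m₁
    set y := A m₂
    have hxy : x + y < 2 * ((i:ℝ) * t) := by rw [h1] at hcon; linarith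
    have f1 : ⌊x/(i:ℝ)⌋₊ + ⌊y/(i:ℝ)⌋₊ ≤ ⌊(x+y)/(i:ℝ)⌋₊ := by
      apply Nat.le_floor
      push_cast
      have g1 := Nat.floor_le (le_of_lt (div_pos hx0 hi0))
      have g2 := Nat.floor_le (le_of_lt (div_pos hy0 hi0))
      rw [add_div]
      linarith
    have f2 : ⌊x/t⌋₊ + ⌊y/t⌋₊ ≤ ⌊(x+y)/t⌋₊ := by
      apply Nat.le_floor
      push_cast
      have g1 := Nat.floor_le (le_of_lt (div_pos hx0 ht0))
      have g2 := Nat.floor_le (le_of_lt (div_pos hy0 ht0))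
      rw [add_div]
      linarith
    have g1 : ⌊(x+y)/(i:ℝ)⌋₊ ≤ 2*j := by
      have hlt : (x+y)/(i:ℝ) ≤ 2*t := by
        rw [div_le_iff₀ hi0]; nlinarith
      calc ⌊(x+y)/(i:ℝ)⌋₊ ≤ ⌊2*t⌋₊ := Nat.floor_le_floor hlt
        _ = 2*j := hfl_2t
    have g2 : ⌊(x+y)/t⌋₊ < 2*i := by
      rw [Nat.floor_lt (by positivity)]
      push_cast
      rw [div_lt_iff₀ ht0]
      nlinarith
    omega
  -- Part (3)
  · by_contra hcon
    push_neg at hcon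
    have hmbig : 1 ≤ 2*i + 2*j + 1 := by omega
    have hr := hrank (2*i+2*j+1) hmbig
    have hx0 : 0 < A (2*i+2*j+1) := hSpos _ (hmem _ hmbig)
    set x := A (2*i+2*j+1)
    rw [h1] at hcon
    have g1 : ⌊x/(i:ℝ)⌋₊ ≤ 2*j := by
      have hle : x/(i:ℝ) ≤ 2*t := by
        rw [div_le_iff₀ hi0]; nlinarith
      calc ⌊x/(i:ℝ)⌋₊ ≤ ⌊2*t⌋₊ := Nat.floor_le_floor hle
        _ = 2*j := hfl_2t
    have g2 : ⌊x/t⌋₊ ≤ 2*i := by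
      have hle : x/t ≤ ((2*i : ℕ) : ℝ) := by
        rw [div_le_iff₀ ht0]; push_cast; nlinarith
      calc ⌊x/t⌋₊ ≤ ⌊((2*i:ℕ):ℝ)⌋₊ := Nat.floor_le_floor hle
        _ = 2*i := Nat.floor_natCast _
    omega
end
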